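/- arXiv:2109.05331 — 7 statements merged into one kernel-verified Lean document; each statement's English description precedes it below -/
import Mathlib

section
/- Fix integers p ≥ 4 and q ≥ 3 with (p−2)(q−2) > 4, and set t = (p−2)(q−2)−2, α = (t+√(t²−4))/2. Define a(1)=p, b(1)=0 and, for k ≥ 2, a(k)=((p−3)(q−2)−1)·a(k−1)+((p−3)(q−3)−1)·b(k−1), b(k)=(q−2)·a(k−1)+(q−3)·b(k−1); then define v̌(k)=Σ_{j=1}^k (a(j)+b(j)), ě₁(k)=a(k)+b(k), ě₂(k)=(q−1)·Σ_{j=1}^{k−1} a(j)+(q−2)·Σ_{j=1}^{k−1} b(j), ě(k)=ě₁(k)+ě₂(k), and ň(k)=1−v̌(k)+ě(k). Then for all k ≥ 1: v̌(k) = (p/(t−2))·(α^k + α^{−k} − 2), ě(k) = (p/((α−1)·√(t²−4)))·((α+q−1)·α^k + (αq−α+1)·α^{−k} − q(α+1)), and ň(k) = 1 + (p(q−2)/((α−1)·√(t²−4)))·(α^k + α^{1−k} − α − 1). -/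
open Finset

/-!
The recurrence matrix of `(a, b)` has trace `t` and determinant `1`, so its eigenvalues are `α` and
`α⁻¹`, where `α + α⁻¹ = t` and `α - α⁻¹ = √(t² - 4)`. Hence `a k` and `b k` are explicit
combinations of `α ^ k` and `α⁻¹ ^ k`, the cumulative counts are geometric sums of these, and
after eliminating `t` and `√(t² - 4)` each closed form is an identity of rational functions in `α`.
-/

theorem inv_eq_sub_of_eq_half_add_sqrt {t α : ℝ} (ht : 4 ≤ t ^ 2)
    (hα : α = (t + √(t ^ 2 - 4)) / 2) : α⁻¹ = t - α := by
  refine inv_eq_of_mul_eq_one_right ?_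
  have hsq : √(t ^ 2 - 4) ^ 2 = t ^ 2 - 4 := Real.sq_sqrt (by linarith)
  rw [hα]
  linear_combination (-1 / 4 : ℝ) * hsq

theorem sum_Icc_one_pow {K : Type*} [DivisionRing K] {x : K} (hx : x ≠ 1) (k : ℕ) :
    ∑ j ∈ Icc 1 k, x ^ j = (x ^ (k + 1) - x) / (x - 1) := by
  rw [← Ico_add_one_right_eq_Icc, geom_sum_Ico hx (by omega), pow_one]

def IsPerimeterRecurrence (p q : ℝ) (a b : ℕ → ℝ) : Prop :=
  a 1 = p ∧ b 1 = 0 ∧ ∀ k, 2 ≤ k →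
    a k = ((p - 3) * (q - 2) - 1) * a (k - 1) + ((p - 3) * (q - 3) - 1) * b (k - 1) ∧
    b k = (q - 2) * a (k - 1) + (q - 3) * b (k - 1)

namespace IsPerimeterRecurrence

variable {p q α : ℝ} {a b : ℕ → ℝ}

theorem closed_form (h : IsPerimeterRecurrence p q a b) (hα : 1 < α)
    (hpq : (p - 2) * (q - 2) = α + α⁻¹ + 2) {k : ℕ} (hk : 1 ≤ k) :
    a k = p * (α - q + 3) / (α ^ 2 - 1) * α ^ k +
        p * ((q - 3) * α - 1) * α / (α ^ 2 - 1) * α⁻¹ ^ k ∧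
      b k = p * (q - 2) / (α ^ 2 - 1) * α ^ k - p * (q - 2) * α ^ 2 / (α ^ 2 - 1) * α⁻¹ ^ k := by
  obtain ⟨ha₁, hb₁, hab⟩ := h
  have hsq : α ^ 2 - 1 ≠ 0 := by nlinarith
  have hq : q - 2 ≠ 0 := right_ne_zero_of_mul (by rw [hpq]; positivity)
  -- `p` is determined by `α` and `q`; eliminating it makes each step a rational identity.
  have hp : p = 2 + (α + α⁻¹ + 2) / (q - 2) := by rw [← eq_div_of_mul_eq hq hpq]; ring
  subst hp
  induction k, hk using Nat.le_induction with
  | base =>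
    rw [ha₁, hb₁, pow_one, pow_one]
    constructor <;> (field_simp; ring)
  | succ k hk ih =>
    rw [(hab (k + 1) (by omega)).1, (hab (k + 1) (by omega)).2, Nat.add_sub_cancel, ih.1, ih.2]
    simp only [inv_pow, pow_succ]
    constructor <;> (field_simp; ring)

theorem sum_closed_form (h : IsPerimeterRecurrence p q a b) (hα : 1 < α)
    (hpq : (p - 2) * (q - 2) = α + α⁻¹ + 2) (k : ℕ) :
    ∑ j ∈ Icc 1 k, a j = p * α / ((α ^ 2 - 1) * (α - 1)) *
        ((α - q + 3) * (α ^ k - 1) + ((q - 3) * α - 1) * (1 - α⁻¹ ^ k)) ∧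
      ∑ j ∈ Icc 1 k, b j = p * (q - 2) * α / ((α ^ 2 - 1) * (α - 1)) *
        (α ^ k - 1 - α + α * α⁻¹ ^ k) := by
  have hsub : α - 1 ≠ 0 := by linarith
  have hsub' : 1 - α ≠ 0 := by linarith
  have hinv : α⁻¹ ≠ 1 := inv_ne_one.mpr hα.ne'
  constructor
  · rw [sum_congr rfl fun j hj => (h.closed_form hα hpq (mem_Icc.mp hj).1).1, sum_add_distrib,
      ← mul_sum, ← mul_sum, sum_Icc_one_pow hα.ne', sum_Icc_one_pow hinv]
    simp only [inv_pow, pow_succ]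
    field_simp
    ring
  · rw [sum_congr rfl fun j hj => (h.closed_form hα hpq (mem_Icc.mp hj).1).2, sum_sub_distrib,
      ← mul_sum, ← mul_sum, sum_Icc_one_pow hα.ne', sum_Icc_one_pow hinv]
    simp only [inv_pow, pow_succ]
    field_simp
    ring

theorem vertex_count (h : IsPerimeterRecurrence p q a b) (hα : 1 < α)
    (hpq : (p - 2) * (q - 2) = α + α⁻¹ + 2) (k : ℕ) :
    ∑ j ∈ Icc 1 k, (a j + b j) = p / (α + α⁻¹ - 2) * (α ^ k + (α ^ k)⁻¹ - 2) := by
  obtain ⟨hSa, hSb⟩ := h.sum_closed_form hα hpq k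
  have hsq : α ^ 2 - 1 ≠ 0 := by nlinarith
  have hsub : α - 1 ≠ 0 := by linarith
  rw [sum_add_distrib, hSa, hSb, inv_pow, show α + α⁻¹ - 2 = (α - 1) ^ 2 / α by field_simp; ring]
  field_simp
  ring

theorem edge_count (h : IsPerimeterRecurrence p q a b) (hα : 1 < α)
    (hpq : (p - 2) * (q - 2) = α + α⁻¹ + 2) {k : ℕ} (hk : 1 ≤ k) :
    a k + b k + ((q - 1) * ∑ j ∈ Icc 1 (k - 1), a j + (q - 2) * ∑ j ∈ Icc 1 (k - 1), b j) =
      p / ((α - 1) * (α - α⁻¹)) *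
        ((α + q - 1) * α ^ k + (α * q - α + 1) * (α ^ k)⁻¹ - q * (α + 1)) := by
  obtain ⟨m, rfl⟩ : ∃ m, k = m + 1 := ⟨k - 1, by omega⟩
  obtain ⟨hSa, hSb⟩ := h.sum_closed_form hα hpq m
  obtain ⟨ha, hb⟩ := h.closed_form hα hpq hk
  have hsub : α - 1 ≠ 0 := by linarith
  rw [Nat.add_sub_cancel, ha, hb, hSa, hSb, show α - α⁻¹ = (α ^ 2 - 1) / α by field_simp]
  simp only [inv_pow, pow_succ]
  field_simp
  ring

theorem tile_count (h : IsPerimeterRecurrence p q a b) (hα : 1 < α)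
    (hpq : (p - 2) * (q - 2) = α + α⁻¹ + 2) {k : ℕ} (hk : 1 ≤ k) :
    1 - ∑ j ∈ Icc 1 k, (a j + b j) +
        (a k + b k + ((q - 1) * ∑ j ∈ Icc 1 (k - 1), a j + (q - 2) * ∑ j ∈ Icc 1 (k - 1), b j)) =
      1 + p * (q - 2) / ((α - 1) * (α - α⁻¹)) * (α ^ k + α / α ^ k - α - 1) := by
  rw [h.vertex_count hα hpq, h.edge_count hα hpq hk,
    show α + α⁻¹ - 2 = (α - 1) ^ 2 / α by field_simp; ring,
    show α - α⁻¹ = (α - 1) * (α + 1) / α by field_simp; ring]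
  field_simp
  ring

end IsPerimeterRecurrence

theorem hyperbolic_pq_layered_animal_parameters_general (p q : ℤ)
    (hpq : 4 < (p - 2) * (q - 2))
    (t α : ℝ) (ht : t = ((p : ℝ) - 2) * ((q : ℝ) - 2) - 2)
    (hα : α = (t + Real.sqrt (t ^ 2 - 4)) / 2)
    (a b v e₁ e₂ e n : ℕ → ℝ)
    (ha1 : a 1 = (p : ℝ)) (hb1 : b 1 = 0)
    (ha : ∀ k, 2 ≤ k →
      a k = (((p : ℝ) - 3) * ((q : ℝ) - 2) - 1) * a (k - 1) +
        (((p : ℝ) - 3) * ((q : ℝ) - 3) - 1) * b (k - 1))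
    (hb : ∀ k, 2 ≤ k →
      b k = ((q : ℝ) - 2) * a (k - 1) + ((q : ℝ) - 3) * b (k - 1))
    (hv : ∀ k, v k = ∑ j ∈ Icc 1 k, (a j + b j))
    (he₁ : ∀ k, e₁ k = a k + b k)
    (he₂ : ∀ k, e₂ k = ((q : ℝ) - 1) * ∑ j ∈ Icc 1 (k - 1), a j +
      ((q : ℝ) - 2) * ∑ j ∈ Icc 1 (k - 1), b j)
    (he : ∀ k, e k = e₁ k + e₂ k)
    (hn : ∀ k, n k = 1 - v k + e k) :
    ∀ k : ℕ, 1 ≤ k →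
      v k = (p : ℝ) / (t - 2) * (α ^ (k : ℤ) + α ^ (-(k : ℤ)) - 2) ∧
      e k = (p : ℝ) / ((α - 1) * Real.sqrt (t ^ 2 - 4)) *
        ((α + (q : ℝ) - 1) * α ^ (k : ℤ) + (α * (q : ℝ) - α + 1) * α ^ (-(k : ℤ)) -
          (q : ℝ) * (α + 1)) ∧
      n k = 1 + (p : ℝ) * ((q : ℝ) - 2) / ((α - 1) * Real.sqrt (t ^ 2 - 4)) *
        (α ^ (k : ℤ) + α ^ (1 - (k : ℤ)) - α - 1) := by
  have hpq' : (4 : ℝ) < (p - 2) * (q - 2) := by exact_mod_cast hpq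
  have hinv : α⁻¹ = t - α := inv_eq_sub_of_eq_half_add_sqrt (by nlinarith) hα
  have hα₁ : 1 < α := by rw [hα]; linarith [Real.sqrt_nonneg (t ^ 2 - 4)]
  have htα : t = α + α⁻¹ := by linarith
  have hsqrt : √(t ^ 2 - 4) = α - α⁻¹ := by linarith
  have hpqα : ((p : ℝ) - 2) * ((q : ℝ) - 2) = α + α⁻¹ + 2 := by linarith
  have hrec : IsPerimeterRecurrence p q a b := ⟨ha1, hb1, fun k hk => ⟨ha k hk, hb k hk⟩⟩
  intro k hk
  have hV := hrec.vertex_count hα₁ hpqα k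
  have hE := hrec.edge_count hα₁ hpqα hk
  have hN := hrec.tile_count hα₁ hpqα hk
  rw [← hv] at hV hN
  rw [← he₁, ← he₂, ← he] at hE hN
  rw [← hn] at hN
  rw [zpow_neg, zpow_sub₀ (by positivity), zpow_one, zpow_natCast, hsqrt, htα]
  exact ⟨hV, hE, hN⟩

/-- Closed forms for the total vertex, edge, and tile counts of the complete
`k`-layered `{p,q}`-animal, `p ≥ 4`, `(p-2)(q-2) > 4` (hyperbolic case). -/
theorem hyperbolic_pq_layered_animal_parameters (p q : ℤ) (hp : 4 ≤ p) (hq : 3 ≤ q)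
    (hpq : 4 < (p - 2) * (q - 2))
    (t α : ℝ) (ht : t = ((p : ℝ) - 2) * ((q : ℝ) - 2) - 2)
    (hα : α = (t + Real.sqrt (t ^ 2 - 4)) / 2)
    (a b v e₁ e₂ e n : ℕ → ℝ)
    (ha1 : a 1 = (p : ℝ)) (hb1 : b 1 = 0)
    (ha : ∀ k, 2 ≤ k →
      a k = (((p : ℝ) - 3) * ((q : ℝ) - 2) - 1) * a (k - 1) +
        (((p : ℝ) - 3) * ((q : ℝ) - 3) - 1) * b (k - 1))
    (hb : ∀ k, 2 ≤ k →
      b k = ((q : ℝ) - 2) * a (k - 1) + ((q : ℝ) - 3) * b (k - 1))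
    (hv : ∀ k, v k = ∑ j ∈ Icc 1 k, (a j + b j))
    (he₁ : ∀ k, e₁ k = a k + b k)
    (he₂ : ∀ k, e₂ k = ((q : ℝ) - 1) * ∑ j ∈ Icc 1 (k - 1), a j +
      ((q : ℝ) - 2) * ∑ j ∈ Icc 1 (k - 1), b j)
    (he : ∀ k, e k = e₁ k + e₂ k)
    (hn : ∀ k, n k = 1 - v k + e k) :
    ∀ k : ℕ, 1 ≤ k →
      v k = (p : ℝ) / (t - 2) * (α ^ (k : ℤ) + α ^ (-(k : ℤ)) - 2) ∧
      e k = (p : ℝ) / ((α - 1) * Real.sqrt (t ^ 2 - 4)) *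
        ((α + (q : ℝ) - 1) * α ^ (k : ℤ) + (α * (q : ℝ) - α + 1) * α ^ (-(k : ℤ)) -
          (q : ℝ) * (α + 1)) ∧
      n k = 1 + (p : ℝ) * ((q : ℝ) - 2) / ((α - 1) * Real.sqrt (t ^ 2 - 4)) *
        (α ^ (k : ℤ) + α ^ (1 - (k : ℤ)) - α - 1) :=
  hyperbolic_pq_layered_animal_parameters_general p q hpq t α ht hα a b v e₁ e₂ e n ha1 hb1 ha hb hv
    he₁ he₂ he hn
end

section
/- Fix integers p ≥ 4 and q ≥ 3 with (p−2)(q−2) > 4, and set t = (p−2)(q−2)−2, α = (t+√(t²−4))/2. With a(k), b(k), v̌(k), ě₁(k), ě₂(k) defined as follows — a(1)=p, b(1)=0, a(k)=((p−3)(q−2)−1)·a(k−1)+((p−3)(q−3)−1)·b(k−1), b(k)=(q−2)·a(k−1)+(q−3)·b(k−1) for k ≥ 2; v̌(k)=Σ_{j=1}^k (a(j)+b(j)); ě₁(k)=a(k)+b(k); ě₂(k)=(q−1)·Σ_{j=1}^{k−1} a(j)+(q−2)·Σ_{j=1}^{k−1} b(j); v̌_int(k)=v̌(k)−ě₁(k)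 — one has, for all k ≥ 1: ě₁(k) = (p(α+1)/√(t²−4))·(α^{k−1} − α^{−k}), ě₂(k) = (p/((α−1)·√(t²−4)))·((αq−α+1)·α^{k−1} + (q−1+α)·α^{1−k} − q(α+1)), and v̌_int(k) = (p/(t−2))·(α^{k−1} + α^{1−k} − 2). -/
open Finset

/-- Closed forms for the perimeter-edge, interior-edge, and interior-vertex counts of
the complete `k`-layered `{p,q}`-animal, `p ≥ 4`, `(p-2)(q-2) > 4` (hyperbolic case). -/
theorem hyperbolic_pq_layered_animal_interior_parameters (p q : ℤ) (hp : 4 ≤ p) (hq : 3 ≤ q)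
    (hpq : 4 < (p - 2) * (q - 2))
    (t α : ℝ) (ht : t = ((p : ℝ) - 2) * ((q : ℝ) - 2) - 2)
    (hα : α = (t + Real.sqrt (t ^ 2 - 4)) / 2)
    (a b v e₁ e₂ vint : ℕ → ℝ)
    (ha1 : a 1 = (p : ℝ)) (hb1 : b 1 = 0)
    (ha : ∀ k, 2 ≤ k →
      a k = (((p : ℝ) - 3) * ((q : ℝ) - 2) - 1) * a (k - 1) +
        (((p : ℝ) - 3) * ((q : ℝ) - 3) - 1) * b (k - 1))
    (hb : ∀ k, 2 ≤ k →
      b k = ((q : ℝ) - 2) * a (k - 1) + ((q : ℝ) - 3) * b (k - 1))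
    (hv : ∀ k, v k = ∑ j ∈ Icc 1 k, (a j + b j))
    (he₁ : ∀ k, e₁ k = a k + b k)
    (he₂ : ∀ k, e₂ k = ((q : ℝ) - 1) * ∑ j ∈ Icc 1 (k - 1), a j +
      ((q : ℝ) - 2) * ∑ j ∈ Icc 1 (k - 1), b j)
    (hvint : ∀ k, vint k = v k - e₁ k) :
    ∀ k : ℕ, 1 ≤ k →
      e₁ k = (p : ℝ) * (α + 1) / Real.sqrt (t ^ 2 - 4) *
        (α ^ ((k : ℤ) - 1) - α ^ (-(k : ℤ))) ∧
      e₂ k = (p : ℝ) / ((α - 1) * Real.sqrt (t ^ 2 - 4)) *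
        ((α * (q : ℝ) - α + 1) * α ^ ((k : ℤ) - 1) + ((q : ℝ) - 1 + α) * α ^ (1 - (k : ℤ)) -
          (q : ℝ) * (α + 1)) ∧
      vint k = (p : ℝ) / (t - 2) * (α ^ ((k : ℤ) - 1) + α ^ (1 - (k : ℤ)) - 2) := by
  have hpq' : (4 : ℝ) < ((p : ℝ) - 2) * ((q : ℝ) - 2) := by
    have : ((4 : ℤ) : ℝ) < (((p - 2) * (q - 2) : ℤ) : ℝ) := by exact_mod_cast hpq
    push_cast at this; linarith
  have ht2 : 2 < t := by rw [ht]; linarith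
  have htsq : (0 : ℝ) < t ^ 2 - 4 := by nlinarith
  set D := Real.sqrt (t ^ 2 - 4) with hDdef
  have hDpos : 0 < D := Real.sqrt_pos.mpr htsq
  have hDsq : D ^ 2 = t ^ 2 - 4 := Real.sq_sqrt htsq.le
  have hD0 : D ≠ 0 := ne_of_gt hDpos
  have hαe : 2 * α - t = D := by rw [hα]; ring
  have hchar : α ^ 2 = t * α - 1 := by
    have h4 : (2 * α - t) ^ 2 = t ^ 2 - 4 := by rw [hαe]; exact hDsq
    linear_combination h4 / 4
  have hα1 : 1 < α := by rw [hα]; linarith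
  have hα0 : α ≠ 0 := ne_of_gt (by linarith)
  have hαm1 : α - 1 ≠ 0 := sub_ne_zero.mpr (ne_of_gt hα1)
  have ht20 : t - 2 ≠ 0 := sub_ne_zero.mpr (ne_of_gt ht2)
  have hinv : α⁻¹ = t - α := inv_eq_of_mul_eq_one_right (by linear_combination -hchar)
  -- closed forms for a and b
  have hab : ∀ n : ℕ, D * a (n + 1) =
      (p : ℝ) * ((α - q + 3) * α ^ n - ((t - α) - q + 3) * (t - α) ^ n) ∧
      D * b (n + 1) = (p : ℝ) * ((q : ℝ) - 2) * (α ^ n - (t - α) ^ n) := by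
    intro n
    induction n with
    | zero =>
      constructor
      · simp only [zero_add]
        rw [ha1]
        linear_combination (-(p : ℝ)) * hαe
      · simp only [zero_add]
        rw [hb1]
        ring
    | succ n ih =>
      obtain ⟨iha, ihb⟩ := ih
      have hrec_a := ha (n + 1 + 1) (by omega)
      have hrec_b := hb (n + 1 + 1) (by omega)
      simp only [Nat.add_sub_cancel] at hrec_a hrec_b
      constructor
      · rw [hrec_a]
        linear_combination (((p : ℝ) - 3) * ((q : ℝ) - 2) - 1) * iha +
          (((p : ℝ) - 3) * ((q : ℝ) - 3) - 1) * ihb +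
          (-(p : ℝ) * α ^ n + (p : ℝ) * (t - α) ^ n) * hchar +
          (-(p : ℝ) * α ^ (n + 1) + (p : ℝ) * (t - α) ^ (n + 1)) * ht
      · rw [hrec_b]
        linear_combination ((q : ℝ) - 2) * iha + ((q : ℝ) - 3) * ihb
  -- closed forms for the partial sums
  have hSa : ∀ n : ℕ, D * (t - 2) * (∑ j ∈ Icc 1 n, a j) =
      (p : ℝ) * (((t - α) - q + 3) * ((t - α) ^ n - 1) * (α - 1) -
        (α - q + 3) * (α ^ n - 1) * ((t - α) - 1)) := by
    intro n
    induction n with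
    | zero =>
      rw [Finset.Icc_eq_empty (by omega), Finset.sum_empty]
      ring
    | succ n ih =>
      rw [Finset.sum_Icc_succ_top (by omega : 1 ≤ n + 1)]
      linear_combination ih + (t - 2) * (hab n).1 +
        (-(p : ℝ) * ((α - q + 3) * α ^ n - ((t - α) - q + 3) * (t - α) ^ n)) * hchar
  have hSb : ∀ n : ℕ, D * (t - 2) * (∑ j ∈ Icc 1 n, b j) =
      (p : ℝ) * ((q : ℝ) - 2) * (((t - α) ^ n - 1) * (α - 1) - (α ^ n - 1) * ((t - α) - 1)) := by
    intro n
    induction n with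
    | zero =>
      rw [Finset.Icc_eq_empty (by omega), Finset.sum_empty]
      ring
    | succ n ih =>
      rw [Finset.sum_Icc_succ_top (by omega : 1 ≤ n + 1)]
      linear_combination ih + (t - 2) * (hab n).2 +
        (-(p : ℝ) * ((q : ℝ) - 2) * (α ^ n - (t - α) ^ n)) * hchar
  -- the main statement
  intro k hk
  obtain ⟨n, rfl⟩ : ∃ n, k = n + 1 := ⟨k - 1, by omega⟩
  have hz : ∀ m : ℕ, α ^ (-(m : ℤ)) = (t - α) ^ m := by
    intro m
    rw [zpow_neg, zpow_natCast, ← inv_pow, hinv]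
  have hz1 : α ^ (((n + 1 : ℕ) : ℤ) - 1) = α ^ n := by
    rw [show ((n + 1 : ℕ) : ℤ) - 1 = ((n : ℕ) : ℤ) by push_cast; ring, zpow_natCast]
  have hz2 : α ^ (1 - ((n + 1 : ℕ) : ℤ)) = (t - α) ^ n := by
    rw [show 1 - ((n + 1 : ℕ) : ℤ) = -((n : ℕ) : ℤ) by push_cast; ring]
    exact hz n
  have hz3 : α ^ (-((n + 1 : ℕ) : ℤ)) = (t - α) ^ (n + 1) := by
    rw [show -((n + 1 : ℕ) : ℤ) = -(((n + 1 : ℕ) : ℕ) : ℤ) by push_cast; ring]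
    exact hz (n + 1)
  refine ⟨?_, ?_, ?_⟩
  · rw [he₁, hz1, hz3, div_mul_eq_mul_div, eq_div_iff hD0]
    linear_combination (hab n).1 + (hab n).2 + (-(p : ℝ) * (t - α) ^ n) * hchar
  · rw [he₂]
    simp only [Nat.add_sub_cancel]
    rw [hz1, hz2, div_mul_eq_mul_div, eq_div_iff (mul_ne_zero hαm1 hD0)]
    apply mul_left_cancel₀ ht20
    linear_combination ((α - 1) * ((q : ℝ) - 1)) * hSa n + ((α - 1) * ((q : ℝ) - 2)) * hSb n +
      ((p : ℝ) * (((t - α) ^ n - 1) * (((q : ℝ) - 1) * (t - α) + 1) +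
        (α ^ n - 1) * (((q : ℝ) - 1) * α + 1) -
        (t - 2) * ((q : ℝ) - 1) * ((t - α) ^ n - 1))) * hchar
  · rw [hvint, hv, he₁, Finset.sum_add_distrib, hz1, hz2, div_mul_eq_mul_div, eq_div_iff ht20]
    apply mul_left_cancel₀ hD0
    linear_combination hSa (n + 1) + hSb (n + 1) - (t - 2) * (hab n).1 - (t - 2) * (hab n).2 +
      ((p : ℝ) * (α ^ n + (t - α) ^ n - 2)) * hαe +
      ((p : ℝ) * ((α + 2) * α ^ n + (α - t - 2) * (t - α) ^ n)) * hchar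
end

section
/- Fix an integer q ≥ 7 and set t = q−4, α = (t+√(t²−4))/2. Define c(2)=3(q−4), d(2)=3 and, for k ≥ 3, c(k)=(q−5)·c(k−1)+(q−6)·d(k−1), d(k)=c(k−1)+d(k−1); then define v̌(1)=3, v̌(k)=v̌(k−1)+c(k)+d(k) for k ≥ 2; ě₁(1)=3, ě₁(k)=c(k)+d(k) for k ≥ 2; ě₂(1)=0, ě₂(2)=3(q−1), ě₂(k)=ě₂(k−1)+(q−2)·c(k−1)+(q−3)·d(k−1) for k ≥ 3; ě(k)=ě₁(k)+ě₂(k); ň(k)=1−v̌(k)+ě(k). Then for all k ≥ 2, with p = 3: v̌(k) = (p/(t−2))·(α^k + α^{−k} − 2), ě(k) = (p/((α−1)·√(t²−4)))·((α+q−1)·α^k + (αq−α+1)·α^{−k} − q(α+1)), and ň(k) = 1 + (p(q−2)/((α−1)·√(t²−4)))·(α^k + α^{1−k} − α − 1). -/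
/-- Closed forms for the total vertex, edge, and tile counts of the complete
`k`-layered `{3,q}`-animal, `q ≥ 7` (hyperbolic case). -/
theorem hyperbolic_3q_layered_animal_parameters (q : ℕ) (hq : 7 ≤ q)
    (t α : ℝ) (ht : t = (q : ℝ) - 4)
    (hα : α = (t + Real.sqrt (t ^ 2 - 4)) / 2)
    (c d v e₁ e₂ e n : ℕ → ℝ)
    (hc2 : c 2 = 3 * ((q : ℝ) - 4)) (hd2 : d 2 = 3)
    (hc : ∀ k, 3 ≤ k → c k = ((q : ℝ) - 5) * c (k - 1) + ((q : ℝ) - 6) * d (k - 1))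
    (hd : ∀ k, 3 ≤ k → d k = c (k - 1) + d (k - 1))
    (hv1 : v 1 = 3) (hv : ∀ k, 2 ≤ k → v k = v (k - 1) + c k + d k)
    (he₁1 : e₁ 1 = 3) (he₁ : ∀ k, 2 ≤ k → e₁ k = c k + d k)
    (he₂1 : e₂ 1 = 0) (he₂2 : e₂ 2 = 3 * ((q : ℝ) - 1))
    (he₂ : ∀ k, 3 ≤ k →
      e₂ k = e₂ (k - 1) + ((q : ℝ) - 2) * c (k - 1) + ((q : ℝ) - 3) * d (k - 1))
    (he : ∀ k, e k = e₁ k + e₂ k)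
    (hn : ∀ k, n k = 1 - v k + e k) :
    ∀ k : ℕ, 2 ≤ k →
      v k = (3 : ℝ) / (t - 2) * (α ^ (k : ℤ) + α ^ (-(k : ℤ)) - 2) ∧
      e k = (3 : ℝ) / ((α - 1) * Real.sqrt (t ^ 2 - 4)) *
        ((α + (q : ℝ) - 1) * α ^ (k : ℤ) + (α * (q : ℝ) - α + 1) * α ^ (-(k : ℤ)) -
          (q : ℝ) * (α + 1)) ∧
      n k = 1 + (3 : ℝ) * ((q : ℝ) - 2) / ((α - 1) * Real.sqrt (t ^ 2 - 4)) *
        (α ^ (k : ℤ) + α ^ (1 - (k : ℤ)) - α - 1) := by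
  have hq7 : (7:ℝ) ≤ (q:ℝ) := by exact_mod_cast hq
  have ht3 : (3:ℝ) ≤ t := by rw [ht]; linarith
  obtain ⟨s, hsdef⟩ : ∃ x, Real.sqrt (t ^ 2 - 4) = x := ⟨_, rfl⟩
  rw [hsdef] at hα
  rw [hsdef]
  have hs2 : s ^ 2 = t ^ 2 - 4 := by rw [← hsdef]; exact Real.sq_sqrt (by nlinarith)
  have hspos : 0 < s := by rw [← hsdef]; exact Real.sqrt_pos.mpr (by nlinarith)
  have hsne : s ≠ 0 := ne_of_gt hspos
  have hα1 : 1 < α := by rw [hα]; nlinarith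
  have hα0 : α ≠ 0 := by intro h; rw [h] at hα1; norm_num at hα1
  have hαm1 : α - 1 ≠ 0 := sub_ne_zero.mpr (ne_of_gt hα1)
  have ht2 : t - 2 ≠ 0 := ne_of_gt (by linarith)
  have hα2 : α ^ 2 = t * α - 1 := by rw [hα]; linear_combination (1/4 : ℝ) * hs2
  have hs' : s = 2 * α - t := by rw [hα]; ring
  have hq' : (q:ℝ) = t + 4 := by rw [ht]; ring
  have hinv : α⁻¹ = t - α :=
    inv_eq_of_mul_eq_one_right (by linear_combination -hα2)
  have key : ∀ k : ℕ, 2 ≤ k →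
      s * c k = 3 * ((1 - (t - α) ^ 2) * α ^ (k:ℤ) + (α ^ 2 - 1) * α ^ (-(k:ℤ))) ∧
      s * d k = 3 * ((α + 1) * (t - α) ^ 2 * α ^ (k:ℤ)
        - ((t - α) + 1) * α ^ 2 * α ^ (-(k:ℤ))) ∧
      s * (t - 2) * v k = s * (3 * (α ^ (k:ℤ) + α ^ (-(k:ℤ)) - 2)) ∧
      (α - 1) * s * e₂ k =
        3 * ((α + (q:ℝ) - 1) * α ^ (k:ℤ) + (α * (q:ℝ) - α + 1) * α ^ (-(k:ℤ))
          - (q:ℝ) * (α + 1))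
        - (α - 1) * (3 * ((1 - (t - α) ^ 2) * α ^ (k:ℤ) + (α ^ 2 - 1) * α ^ (-(k:ℤ)))
          + 3 * ((α + 1) * (t - α) ^ 2 * α ^ (k:ℤ)
            - ((t - α) + 1) * α ^ 2 * α ^ (-(k:ℤ)))) := by
    intro k hk
    induction k, hk using Nat.le_induction with
    | base =>
      have hX2 : α ^ ((2:ℕ):ℤ) = α ^ 2 := zpow_natCast α 2
      have hY2 : α ^ (-((2:ℕ):ℤ)) = (t - α) ^ 2 := by
        rw [zpow_neg, hX2, ← hinv, inv_pow]
      have h21 : (2:ℕ) - 1 = 1 := rfl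
      have hv2 : v 2 = 3 + 3 * ((q:ℝ) - 4) + 3 := by
        have h := hv 2 le_rfl
        rw [h21, hv1, hc2, hd2] at h
        exact h
      refine ⟨?_, ?_, ?_, ?_⟩
      · rw [hc2, hX2, hY2]
        linear_combination ((3:ℝ) * t) * hs' + ((3:ℝ) * s) * hq'
      · rw [hd2, hX2, hY2]
        linear_combination ((-3:ℝ) * t + (6:ℝ) * α + (-3:ℝ) * α * t ^ 2 + (9:ℝ) * α ^ 2 * t
            + (-6:ℝ) * α ^ 3) * hα2 + (3:ℝ) * hs'
      · rw [hv2, hX2, hY2]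
        linear_combination ((6:ℝ) * t + (-12:ℝ) * α) * hα2
          + ((-6:ℝ) + (6:ℝ) * α * t + (-6:ℝ) * α ^ 2) * hs'
          + ((-6:ℝ) * s + (3:ℝ) * t * s) * hq'
      · rw [he₂2, hX2, hY2]
        linear_combination ((12:ℝ) + (12:ℝ) * t + (3:ℝ) * t ^ 2 + (-6:ℝ) * α
            + (-3:ℝ) * α * t ^ 2 + (-6:ℝ) * α ^ 2 + (9:ℝ) * α ^ 2 * t + (3:ℝ) * α ^ 2 * t ^ 2
            + (-6:ℝ) * α ^ 3 + (-9:ℝ) * α ^ 3 * t + (6:ℝ) * α ^ 4) * hα2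
          + ((-9:ℝ) + (-3:ℝ) * t + (9:ℝ) * α + (3:ℝ) * α * t) * hs'
          + ((3:ℝ) + (-3:ℝ) * s + (3:ℝ) * α + (3:ℝ) * α * s + (-3:ℝ) * α * t ^ 2
            + (-3:ℝ) * α ^ 2 + (6:ℝ) * α ^ 2 * t + (-3:ℝ) * α ^ 3) * hq'
    | succ k hk ih =>
      obtain ⟨ic, id', iv, ie⟩ := ih
      have hXY : α ^ (k:ℤ) * α ^ (-(k:ℤ)) = 1 := by
        rw [← zpow_add₀ hα0]; simp
      have hcast : ((k+1:ℕ):ℤ) = (k:ℤ) + 1 := by push_cast; ring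
      have hzp : α ^ ((k+1:ℕ):ℤ) = α ^ (k:ℤ) * α := by
        rw [hcast, zpow_add_one₀ hα0]
      have hzZ : α ^ (-((k+1:ℕ):ℤ)) = α ^ (-(k:ℤ)) * (t - α) := by
        rw [zpow_neg, hzp, mul_inv, ← zpow_neg, hinv]
      have hc1 : s * c (k+1) = 3 * ((1 - (t - α) ^ 2) * (α ^ (k:ℤ) * α)
          + (α ^ 2 - 1) * (α ^ (-(k:ℤ)) * (t - α))) := by
        have hck := hc (k+1) (by omega)
        simp only [Nat.add_sub_cancel] at hck
        rw [hck]
        linear_combination ((q:ℝ) - 5) * ic + ((q:ℝ) - 6) * id'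
          + ((3:ℝ) * α ^ (-(k:ℤ)) + (-3:ℝ) * α ^ (k:ℤ) + (3:ℝ) * t * α ^ (k:ℤ)
            + (-3:ℝ) * t ^ 2 * α ^ (k:ℤ) + (-3:ℝ) * α * α ^ (-(k:ℤ))
            + (-3:ℝ) * α * α ^ (k:ℤ) + (3:ℝ) * α * t * α ^ (-(k:ℤ))
            + (3:ℝ) * α * t * α ^ (k:ℤ)) * hα2
          + ((-3:ℝ) * α ^ (-(k:ℤ)) + (3:ℝ) * α ^ (k:ℤ) + (3:ℝ) * α * t ^ 2 * α ^ (k:ℤ)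
            + (-3:ℝ) * α ^ 2 * t * α ^ (-(k:ℤ)) + (-6:ℝ) * α ^ 2 * t * α ^ (k:ℤ)
            + (3:ℝ) * α ^ 3 * α ^ (-(k:ℤ)) + (3:ℝ) * α ^ 3 * α ^ (k:ℤ)) * hq'
      have hd1 : s * d (k+1) = 3 * ((α + 1) * (t - α) ^ 2 * (α ^ (k:ℤ) * α)
          - ((t - α) + 1) * α ^ 2 * (α ^ (-(k:ℤ)) * (t - α))) := by
        have hdk := hd (k+1) (by omega)
        simp only [Nat.add_sub_cancel] at hdk
        rw [hdk]
        linear_combination ic + id'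
          + ((-3:ℝ) * α ^ (-(k:ℤ)) + (3:ℝ) * α ^ (k:ℤ) + (-3:ℝ) * α * t * α ^ (-(k:ℤ))
            + (3:ℝ) * α * t * α ^ (k:ℤ) + (3:ℝ) * α ^ 2 * α ^ (-(k:ℤ))
            + (-3:ℝ) * α ^ 2 * α ^ (k:ℤ)) * hα2
      refine ⟨?_, ?_, ?_, ?_⟩
      · rw [hzp, hzZ]; exact hc1
      · rw [hzp, hzZ]; exact hd1
      · have h := hv (k+1) (by omega)
        simp only [Nat.add_sub_cancel] at h
        rw [h, hzp, hzZ]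
        linear_combination iv + (t - 2) * hc1 + (t - 2) * hd1
          + ((3:ℝ) * t * α ^ (-(k:ℤ)) + (-3:ℝ) * t * α ^ (k:ℤ)
            + (-6:ℝ) * α * t * α ^ (-(k:ℤ)) + (6:ℝ) * α * t * α ^ (k:ℤ)
            + (3:ℝ) * α * t ^ 2 * α ^ (-(k:ℤ)) + (-3:ℝ) * α * t ^ 2 * α ^ (k:ℤ)
            + (6:ℝ) * α ^ 2 * α ^ (-(k:ℤ)) + (-6:ℝ) * α ^ 2 * α ^ (k:ℤ)
            + (-3:ℝ) * α ^ 2 * t * α ^ (-(k:ℤ)) + (3:ℝ) * α ^ 2 * t * α ^ (k:ℤ)) * hα2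
          + ((3:ℝ) * α ^ (-(k:ℤ)) + (3:ℝ) * α ^ (k:ℤ) + (-3:ℝ) * t * α ^ (-(k:ℤ))
            + (3:ℝ) * α * α ^ (-(k:ℤ)) + (-3:ℝ) * α * α ^ (k:ℤ)) * hs'
      · have h := he₂ (k+1) (by omega)
        simp only [Nat.add_sub_cancel] at h
        rw [h, hzp, hzZ]
        linear_combination ie + (α - 1) * ((q:ℝ) - 2) * ic + (α - 1) * ((q:ℝ) - 3) * id'
          + ((6:ℝ) * α ^ (-(k:ℤ)) + (6:ℝ) * α ^ (k:ℤ) + (3:ℝ) * t * α ^ (-(k:ℤ))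
            + (3:ℝ) * t ^ 2 * α ^ (k:ℤ) + (6:ℝ) * α * α ^ (-(k:ℤ))
            + (-6:ℝ) * α * α ^ (k:ℤ) + (-6:ℝ) * α * t * α ^ (-(k:ℤ))
            + (-3:ℝ) * α * t ^ 2 * α ^ (k:ℤ) + (3:ℝ) * α ^ 2 * α ^ (-(k:ℤ))
            + (-3:ℝ) * α ^ 2 * α ^ (k:ℤ) + (6:ℝ) * α ^ 2 * t * α ^ (-(k:ℤ))
            + (-3:ℝ) * α ^ 3 * α ^ (-(k:ℤ)) + (3:ℝ) * α ^ 3 * α ^ (k:ℤ)) * hα2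
          + ((3:ℝ) * α ^ (-(k:ℤ)) + (-3:ℝ) * α * t * α ^ (-(k:ℤ))
            + (-3:ℝ) * α * t ^ 2 * α ^ (k:ℤ) + (3:ℝ) * α ^ 2 * α ^ (-(k:ℤ))
            + (3:ℝ) * α ^ 2 * t * α ^ (-(k:ℤ)) + (6:ℝ) * α ^ 2 * t * α ^ (k:ℤ)
            + (3:ℝ) * α ^ 2 * t ^ 2 * α ^ (k:ℤ) + (-3:ℝ) * α ^ 3 * α ^ (-(k:ℤ))
            + (-3:ℝ) * α ^ 3 * α ^ (k:ℤ) + (-3:ℝ) * α ^ 3 * t * α ^ (-(k:ℤ))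
            + (-6:ℝ) * α ^ 3 * t * α ^ (k:ℤ) + (3:ℝ) * α ^ 4 * α ^ (-(k:ℤ))
            + (3:ℝ) * α ^ 4 * α ^ (k:ℤ)) * hq'
  intro k hk
  obtain ⟨kc, kd, kv, ke2⟩ := key k hk
  have hden : (α - 1) * s ≠ 0 := mul_ne_zero hαm1 hsne
  refine ⟨?_, ?_, ?_⟩
  · rw [div_mul_eq_mul_div, eq_div_iff ht2]
    apply mul_left_cancel₀ hsne
    linear_combination kv
  · rw [div_mul_eq_mul_div, eq_div_iff hden]
    linear_combination ((α - 1) * s) * he k + ((α - 1) * s) * he₁ k hk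
      + (α - 1) * kc + (α - 1) * kd + ke2
  · have hz1 : α ^ (1 - (k:ℤ)) = α * α ^ (-(k:ℤ)) := by
      rw [sub_eq_add_neg, zpow_add₀ hα0, zpow_one]
    rw [hz1, ← sub_eq_iff_eq_add', div_mul_eq_mul_div, eq_div_iff hden]
    apply mul_left_cancel₀ (mul_ne_zero hsne ht2)
    linear_combination (s * (t - 2) * ((α - 1) * s)) * hn k
      + (s * (t - 2) * ((α - 1) * s)) * he k
      + (s * (t - 2) * ((α - 1) * s)) * he₁ k hk
      + ((α - 1) * (t - 2) * s) * kc + ((α - 1) * (t - 2) * s) * kd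
      + ((t - 2) * s) * ke2 + (-(α - 1) * s) * kv
      + ((-12:ℝ) * t + (6:ℝ) * t * α ^ (-(k:ℤ)) + (6:ℝ) * t * α ^ (k:ℤ) + (24:ℝ) * α
        + (-12:ℝ) * α * α ^ (-(k:ℤ)) + (-12:ℝ) * α * α ^ (k:ℤ)) * hα2
      + ((12:ℝ) + (-6:ℝ) * α ^ (-(k:ℤ)) + (-6:ℝ) * α ^ (k:ℤ) + (-6:ℝ) * s
        + (3:ℝ) * s * α ^ (-(k:ℤ)) + (3:ℝ) * s * α ^ (k:ℤ) + (6:ℝ) * α * s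
        + (-3:ℝ) * α * s * α ^ (-(k:ℤ)) + (-3:ℝ) * α * s * α ^ (k:ℤ) + (-12:ℝ) * α * t
        + (6:ℝ) * α * t * α ^ (-(k:ℤ)) + (6:ℝ) * α * t * α ^ (k:ℤ) + (12:ℝ) * α ^ 2
        + (-6:ℝ) * α ^ 2 * α ^ (-(k:ℤ)) + (-6:ℝ) * α ^ 2 * α ^ (k:ℤ)) * hs'
end

section
/- Fix an integer q ≥ 7 and set t = q−4, α = (t+√(t²−4))/2. With c(k), d(k), v̌(k), ě₁(k), ě₂(k) defined as follows — c(2)=3(q−4), d(2)=3, c(k)=(q−5)·c(k−1)+(q−6)·d(k−1), d(k)=c(k−1)+d(k−1) for k ≥ 3; v̌(1)=3, v̌(k)=v̌(k−1)+c(k)+d(k) for k ≥ 2; ě₁(1)=3, ě₁(k)=c(k)+d(k) for k ≥ 2; ě₂(1)=0, ě₂(2)=3(q−1), ě₂(k)=ě₂(k−1)+(q−2)·c(k−1)+(q−3)·d(k−1) for k ≥ 3; v̌_int(k)=v̌(k)−ě₁(k) — one has, for all k ≥ 2, with p = 3: ě₁(k) = (p(α+1)/√(t²−4))·(α^{k−1}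 − α^{−k}), ě₂(k) = (p/((α−1)·√(t²−4)))·((αq−α+1)·α^{k−1} + (q−1+α)·α^{1−k} − q(α+1)), and v̌_int(k) = (p/(t−2))·(α^{k−1} + α^{1−k} − 2). -/
set_option maxHeartbeats 2000000

/-- Closed forms for the perimeter-edge, interior-edge, and interior-vertex counts of
the complete `k`-layered `{3,q}`-animal, `q ≥ 7` (hyperbolic case). -/
theorem hyperbolic_3q_layered_animal_interior_parameters (q : ℕ) (hq : 7 ≤ q)
    (t α : ℝ) (ht : t = (q : ℝ) - 4)
    (hα : α = (t + Real.sqrt (t ^ 2 - 4)) / 2)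
    (c d v e₁ e₂ vint : ℕ → ℝ)
    (hc2 : c 2 = 3 * ((q : ℝ) - 4)) (hd2 : d 2 = 3)
    (hc : ∀ k, 3 ≤ k → c k = ((q : ℝ) - 5) * c (k - 1) + ((q : ℝ) - 6) * d (k - 1))
    (hd : ∀ k, 3 ≤ k → d k = c (k - 1) + d (k - 1))
    (hv1 : v 1 = 3) (hv : ∀ k, 2 ≤ k → v k = v (k - 1) + c k + d k)
    (he₁1 : e₁ 1 = 3) (he₁ : ∀ k, 2 ≤ k → e₁ k = c k + d k)
    (he₂1 : e₂ 1 = 0) (he₂2 : e₂ 2 = 3 * ((q : ℝ) - 1))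
    (he₂ : ∀ k, 3 ≤ k →
      e₂ k = e₂ (k - 1) + ((q : ℝ) - 2) * c (k - 1) + ((q : ℝ) - 3) * d (k - 1))
    (hvint : ∀ k, vint k = v k - e₁ k) :
    ∀ k : ℕ, 2 ≤ k →
      e₁ k = (3 : ℝ) * (α + 1) / Real.sqrt (t ^ 2 - 4) *
        (α ^ ((k : ℤ) - 1) - α ^ (-(k : ℤ))) ∧
      e₂ k = (3 : ℝ) / ((α - 1) * Real.sqrt (t ^ 2 - 4)) *
        ((α * (q : ℝ) - α + 1) * α ^ ((k : ℤ) - 1) + ((q : ℝ) - 1 + α) * α ^ (1 - (k : ℤ)) -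
          (q : ℝ) * (α + 1)) ∧
      vint k = (3 : ℝ) / (t - 2) * (α ^ ((k : ℤ) - 1) + α ^ (1 - (k : ℤ)) - 2) := by
  have hq7 : (7 : ℝ) ≤ (q : ℝ) := by exact_mod_cast hq
  have ht3 : (3 : ℝ) ≤ t := by rw [ht]; linarith
  have hs2 : Real.sqrt (t ^ 2 - 4) ^ 2 = t ^ 2 - 4 := Real.sq_sqrt (by nlinarith)
  have hspos : 0 < Real.sqrt (t ^ 2 - 4) := Real.sqrt_pos.2 (by nlinarith)
  set s := Real.sqrt (t ^ 2 - 4) with hsdef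
  have hα1 : 1 < α := by rw [hα]; linarith
  have hαne : (α : ℝ) ≠ 0 := by linarith
  have hα2 : α ^ 2 = t * α - 1 := by rw [hα]; ring_nf; nlinarith [hs2]
  have htα : t = α + α⁻¹ := by
    field_simp
    nlinarith [hα2]
  have hs_eq : s = α - α⁻¹ := by
    have hsα : s * α = α ^ 2 - 1 := by rw [hα]; ring_nf; nlinarith [hs2]
    field_simp
    nlinarith [hsα]
  have hαne' : (α : ℝ) ≠ 0 := by linarith
  have hp1 : α + 1 ≠ 0 := by linarith
  have hm1 : α - 1 ≠ 0 := by linarith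
  have hs_fac : s = (α - 1) * (α + 1) / α := by
    rw [hs_eq]; field_simp; ring
  have hfac2 : α + α⁻¹ - 2 = (α - 1) * (α - 1) / α := by
    field_simp; ring
  have hqt : (q : ℝ) = t + 4 := by rw [ht]; ring
  have hα1ne : α - 1 ≠ 0 := by linarith
  have hinvlt : α⁻¹ < 1 := by
    rw [inv_lt_one_iff₀]; right; exact hα1
  have hs_ne : α - α⁻¹ ≠ 0 := by
    have : α⁻¹ < α := lt_trans hinvlt hα1
    linarith
  have ht2ne : α + α⁻¹ - 2 ≠ 0 := by
    have h : 0 < α⁻¹ := by positivity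
    have : (α - 1) ^ 2 / α > 0 := by positivity
    have heq : α + α⁻¹ - 2 = (α - 1) ^ 2 / α := by field_simp; ring
    rw [heq]; positivity
  -- main induction
  have key : ∀ k : ℕ, 2 ≤ k →
      c k = 3 * (α + 1) / s *
        (α ^ ((k : ℤ) - 1) - α ^ (-(k : ℤ)) - α ^ ((k : ℤ) - 2) + α ^ (1 - (k : ℤ))) ∧
      d k = 3 * (α + 1) / s * (α ^ ((k : ℤ) - 2) - α ^ (1 - (k : ℤ))) ∧
      e₂ k = (3 : ℝ) / ((α - 1) * s) *
        ((α * (q : ℝ) - α + 1) * α ^ ((k : ℤ) - 1) + ((q : ℝ) - 1 + α) * α ^ (1 - (k : ℤ)) -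
          (q : ℝ) * (α + 1)) ∧
      vint k = (3 : ℝ) / (t - 2) * (α ^ ((k : ℤ) - 1) + α ^ (1 - (k : ℤ)) - 2) := by
    intro k hk
    induction k, hk using Nat.le_induction with
    | base =>
      have hvint2 : vint 2 = 3 := by
        rw [hvint 2, hv 2 (by norm_num), he₁ 2 (by norm_num)]
        norm_num [hv1]
      rw [hqt, htα] at hc2 he₂2
      rw [hqt, htα, hs_fac, hfac2]
      refine ⟨?_, ?_, ?_, ?_⟩
      · rw [hc2]
        norm_num [zpow_neg, zpow_sub₀ hαne, zpow_one, zpow_two]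
        field_simp
        ring
      · rw [hd2]
        norm_num [zpow_neg, zpow_sub₀ hαne, zpow_one, zpow_two]
        field_simp
      · rw [he₂2]
        norm_num [zpow_neg, zpow_sub₀ hαne, zpow_one, zpow_two]
        field_simp
        ring
      · rw [hvint2]
        norm_num [zpow_neg, zpow_sub₀ hαne, zpow_one, zpow_two]
        field_simp
        ring
    | succ k hk ih =>
      obtain ⟨ihc, ihd, ihe2, ihv⟩ := ih
      have hAne : α ^ (k : ℤ) ≠ 0 := zpow_ne_zero _ hαne
      have hz2 : α ^ (2:ℤ) = α * α := by
        rw [show (2:ℤ) = 1 + 1 by norm_num, zpow_add₀ hαne, zpow_one]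
      have hck : c (k + 1) = ((q : ℝ) - 5) * c k + ((q : ℝ) - 6) * d k := by
        have := hc (k + 1) (by omega); simpa using this
      have hdk : d (k + 1) = c k + d k := by
        have := hd (k + 1) (by omega); simpa using this
      have he2k : e₂ (k + 1) = e₂ k + ((q : ℝ) - 2) * c k + ((q : ℝ) - 3) * d k := by
        have := he₂ (k + 1) (by omega); simpa using this
      have hvk : vint (k + 1) = vint k + c k + d k := by
        rw [hvint (k + 1), hv (k + 1) (by omega), he₁ (k + 1) (by omega)]
        simp only [Nat.add_sub_cancel]
        have := hvint k
        linarith [he₁ k hk, hvint k]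
      refine ⟨?_, ?_, ?_, ?_⟩
      · rw [hck, ihc, ihd, hqt, htα, hs_fac]
        push_cast
        simp only [zpow_sub₀ hαne, zpow_add₀ hαne, zpow_neg, zpow_one, hz2]
        rw [show ∀ x y : ℝ, x = y ↔ x = y from fun _ _ => Iff.rfl]
        generalize hA : α ^ (k:ℤ) = A at hAne ⊢
        field_simp
        ring
      · rw [hdk, ihc, ihd, hs_fac]
        push_cast
        simp only [zpow_sub₀ hαne, zpow_add₀ hαne, zpow_neg, zpow_one, hz2]
        rw [show ∀ x y : ℝ, x = y ↔ x = y from fun _ _ => Iff.rfl]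
        generalize hA : α ^ (k:ℤ) = A at hAne ⊢
        field_simp
        ring
      · rw [he2k, ihe2, ihc, ihd, hqt, htα, hs_fac]
        push_cast
        simp only [zpow_sub₀ hαne, zpow_add₀ hαne, zpow_neg, zpow_one, hz2]
        rw [show ∀ x y : ℝ, x = y ↔ x = y from fun _ _ => Iff.rfl]
        generalize hA : α ^ (k:ℤ) = A at hAne ⊢
        field_simp
        ring
      · rw [hvk, ihv, ihc, ihd, htα, hs_fac, hfac2]
        push_cast
        simp only [zpow_sub₀ hαne, zpow_add₀ hαne, zpow_neg, zpow_one, hz2]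
        rw [show ∀ x y : ℝ, x = y ↔ x = y from fun _ _ => Iff.rfl]
        generalize hA : α ^ (k:ℤ) = A at hAne ⊢
        field_simp
        ring
  intro k hk
  obtain ⟨kc, kd, ke2, kv⟩ := key k hk
  refine ⟨?_, ke2, kv⟩
  rw [he₁ k hk, kc, kd]
  ring
end

section
/- Let ň(k) = 6k² − 6k + 1 for integers k ≥ 1. For each integer k ≥ 3 and each integer n with ň(k) ≤ n < ň(k+1), define E(n) by the following piecewise rule, where r = n − ň(k): E(n) = 6k−3 + ((n−1) mod 2) if 0 ≤ r ≤ 1; E(n) = 6k−2 + (n mod 2) if 2 ≤ r ≤ 2k−1; E(n) = 6k−1 + ((n−1) mod 2) if 2k ≤ r ≤ 4k−1; E(n) = 6k + (n mod 2) if 4k ≤ r ≤ 6k; E(n) = 6k+1 + ((n−1) mod 2) if 6k+1 ≤ r ≤ 8k−1; E(n) = 6k+2 + (n mod 2) if 8k ≤ r ≤ 10k; E(n) = 6k+3 + ((n−1) mod 2) if 10k+1 ≤ r ≤ 12k−1. Then for every such n, E(n) = 2·⌈(n + √(6n))/2⌉ − n. -/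
set_option maxHeartbeats 1000000

/-- Number of tiles of the complete `k`-layered `{3,6}`-animal. -/
def triTiles (k : ℕ) : ℤ := 6 * (k : ℤ) ^ 2 - 6 * (k : ℤ) + 1

/-- The piecewise formula for the perimeter of the `{3,6}`-spiral with `n` tiles,
where `ň(k) ≤ n < ň(k+1)`, from the proof of Corollary 1.8. -/
def triPerimeter (k : ℕ) (n : ℤ) : ℤ :=
  let r : ℤ := n - triTiles k
  if r ≤ 1 then 6 * k - 3 + (n - 1) % 2
  else if r ≤ 2 * k - 1 then 6 * k - 2 + n % 2
  else if r ≤ 4 * k - 1 then 6 * k - 1 + (n - 1) % 2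
  else if r ≤ 6 * k then 6 * k + n % 2
  else if r ≤ 8 * k - 1 then 6 * k + 1 + (n - 1) % 2
  else if r ≤ 10 * k then 6 * k + 2 + n % 2
  else 6 * k + 3 + (n - 1) % 2

lemma key (n P : ℤ) (hP : 0 ≤ P) (h1 : (P - 2) ^ 2 < 6 * n) (h2 : 6 * n ≤ P ^ 2)
    (hpar : 2 ∣ (P + n)) :
    2 * ⌈((n : ℝ) + Real.sqrt (6 * (n : ℝ))) / 2⌉ - n = P := by
  obtain ⟨m, hm⟩ := hpar
  have h6n : (0:ℝ) ≤ 6 * (n : ℝ) := by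
    have : (0:ℤ) ≤ 6 * n := le_of_lt (lt_of_le_of_lt (sq_nonneg _) h1)
    exact_mod_cast this
  have hsq : Real.sqrt (6 * (n:ℝ)) ^ 2 = 6 * n := Real.sq_sqrt h6n
  have hsnn : 0 ≤ Real.sqrt (6 * (n:ℝ)) := Real.sqrt_nonneg _
  have hub : Real.sqrt (6 * (n:ℝ)) ≤ (P : ℝ) := by
    have := Real.sqrt_le_sqrt (by exact_mod_cast h2 : 6 * (n:ℝ) ≤ (P:ℝ)^2)
    rwa [Real.sqrt_sq (by exact_mod_cast hP : (0:ℝ) ≤ (P:ℝ))] at this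
  have hlb : (P : ℝ) - 2 < Real.sqrt (6 * (n:ℝ)) := by
    by_contra h
    push_neg at h
    have hmul := mul_self_le_mul_self hsnn h
    rw [← pow_two, ← pow_two, hsq] at hmul
    have h1' : ((P:ℝ) - 2)^2 < 6 * (n:ℝ) := by exact_mod_cast h1
    exact lt_irrefl _ (lt_of_le_of_lt hmul h1')
  have hceil : ⌈((n : ℝ) + Real.sqrt (6 * (n : ℝ))) / 2⌉ = m := by
    rw [Int.ceil_eq_iff]
    have hm' : (P:ℝ) + n = 2 * m := by exact_mod_cast hm
    constructor
    · nlinarith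
    · nlinarith
  rw [hceil]; omega

/-- The piecewise perimeter formula for `{3,6}`-spirals agrees with Harary and
Harborth's closed formula `2⌈(n+√(6n))/2⌉ − n`. -/
theorem triangular_spiral_perimeter_formula (k : ℕ) (hk : 3 ≤ k) (n : ℤ)
    (hn₁ : triTiles k ≤ n) (hn₂ : n < triTiles (k + 1)) :
    triPerimeter k n = 2 * ⌈((n : ℝ) + Real.sqrt (6 * (n : ℝ))) / 2⌉ - n := by
  have hk' : (3:ℤ) ≤ (k:ℤ) := by exact_mod_cast hk
  unfold triTiles at hn₁ hn₂
  push_cast at hn₂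
  unfold triPerimeter triTiles
  simp only
  rcases Int.even_or_odd' n with ⟨m, hm | hm⟩
  · -- n = 2 * m (even)
    have e1 : (n - 1) % 2 = 1 := by omega
    have e2 : n % 2 = 0 := by omega
    rw [e1, e2]
    split_ifs with h1 h2 h3 h4 h5 h6
    · exact (key n _ (by omega) (by nlinarith) (by nlinarith) (by omega)).symm
    · exact (key n _ (by omega) (by nlinarith) (by nlinarith) (by omega)).symm
    · exact (key n _ (by omega) (by nlinarith) (by nlinarith) (by omega)).symm
    · -- r ∈ [4k, 6k], n even ⇒ r odd ⇒ r ≤ 6k - 1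
      have href : n ≤ 6 * (k:ℤ) ^ 2 - 6 * (k:ℤ) + 1 + (6 * (k:ℤ) - 1) := by
        obtain ⟨Q, hQ⟩ : ∃ q : ℤ, q = ((k:ℤ)) ^ 2 := ⟨_, rfl⟩
        rw [← hQ] at h4 ⊢
        omega
      exact (key n _ (by omega) (by nlinarith) (by nlinarith) (by omega)).symm
    · exact (key n _ (by omega) (by nlinarith) (by nlinarith) (by omega)).symm
    · -- r ∈ [8k, 10k], n even ⇒ r odd ⇒ r ≤ 10k - 1
      have href : n ≤ 6 * (k:ℤ) ^ 2 - 6 * (k:ℤ) + 1 + (10 * (k:ℤ) - 1) := by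
        obtain ⟨Q, hQ⟩ : ∃ q : ℤ, q = ((k:ℤ)) ^ 2 := ⟨_, rfl⟩
        rw [← hQ] at h6 ⊢
        omega
      exact (key n _ (by omega) (by nlinarith) (by nlinarith) (by omega)).symm
    · exact (key n _ (by omega) (by nlinarith) (by nlinarith) (by omega)).symm
  · -- n = 2 * m + 1 (odd)
    have e1 : (n - 1) % 2 = 0 := by omega
    have e2 : n % 2 = 1 := by omega
    rw [e1, e2]
    split_ifs with h1 h2 h3 h4 h5 h6
    · -- r ≤ 1, n odd ⇒ r even ⇒ r ≤ 0
      have href : n ≤ 6 * (k:ℤ) ^ 2 - 6 * (k:ℤ) + 1 := by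
        obtain ⟨Q, hQ⟩ : ∃ q : ℤ, q = ((k:ℤ)) ^ 2 := ⟨_, rfl⟩
        rw [← hQ] at h1 ⊢
        omega
      exact (key n _ (by omega) (by nlinarith) (by nlinarith) (by omega)).symm
    · exact (key n _ (by omega) (by nlinarith) (by nlinarith) (by omega)).symm
    · exact (key n _ (by omega) (by nlinarith) (by nlinarith) (by omega)).symm
    · exact (key n _ (by omega) (by nlinarith) (by nlinarith) (by omega)).symm
    · exact (key n _ (by omega) (by nlinarith) (by nlinarith) (by omega)).symm
    · exact (key n _ (by omega) (by nlinarith) (by nlinarith) (by omega)).symm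
    · exact (key n _ (by omega) (by nlinarith) (by nlinarith) (by omega)).symm
end

section
/- Define the substitution σ on symbols by σ(4) = [4], σ(3) = [4,3], σ(2) = [4,3,3], and define lists of integers d_1 = [2,2,2] and, for k ≥ 2, d_k = the concatenation of σ applied to each entry of d_{k−1} in order. Then for every k ≥ 3, d_k equals the concatenation of three consecutive copies of the block consisting of (k−1) copies of 4, followed by one 3, followed by (k−2) copies of 4, followed by one 3. -/
/-- The substitution rule for the perimeter degree sequences of the `{3,6}`-tessellation:
`4 → 4`; `3 → 4,3`; `2 → 4,3,3`. -/
def sub36 : ℕ → List ℕ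
  | 4 => [4]
  | 3 => [4, 3]
  | 2 => [4, 3, 3]
  | _ => []

/-- The perimeter degree sequence `d_k` of the complete `k`-layered `{3,6}`-animal:
`d_1 = [2,2,2]` and `d_k` is obtained from `d_{k-1}` by applying `sub36` entrywise. -/
def degSeq36 : ℕ → List ℕ
  | 0 => []
  | 1 => [2, 2, 2]
  | k + 2 => (degSeq36 (k + 1)).flatMap sub36

lemma flatMap_rep4 (n : ℕ) : (List.replicate n 4).flatMap sub36 = List.replicate n 4 := by
  induction n with
  | zero => rfl
  | succ n ih => simp [List.replicate_succ, List.flatMap_cons, ih, sub36]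

lemma flatMap_block (n : ℕ) :
    (List.replicate (n + 1) 4 ++ [3] ++ List.replicate n 4 ++ [3]).flatMap sub36
      = List.replicate (n + 2) 4 ++ [3] ++ List.replicate (n + 1) 4 ++ [3] := by
  simp [List.flatMap_append, flatMap_rep4, sub36, List.replicate_succ' (n := n + 1),
    List.replicate_succ' (n := n)]

/-- For `k ≥ 3`, `d_k` consists of the block `4,…,4,3,4,…,4,3` (with `k-1` and then
`k-2` fours), repeated three times. -/
theorem degSeq36_eq (k : ℕ) (hk : 3 ≤ k) :
    degSeq36 k =
      let block := List.replicate (k - 1) 4 ++ [3] ++ List.replicate (k - 2) 4 ++ [3]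
      block ++ block ++ block := by
  induction k, hk using Nat.le_induction with
  | base => decide
  | succ k hk ih =>
    obtain ⟨m, rfl⟩ : ∃ m, k = m + 3 := ⟨k - 3, by omega⟩
    show (degSeq36 (m + 3)).flatMap sub36 = _
    rw [ih]
    simp only [show m + 3 - 1 = m + 2 from rfl, show m + 3 - 2 = m + 1 from rfl,
      show m + 3 + 1 - 1 = m + 3 from rfl, show m + 3 + 1 - 2 = m + 2 from rfl]
    simp [List.flatMap_append, flatMap_rep4, sub36, List.replicate_succ' (n := m + 2), List.replicate_succ' (n := m + 1)]
end

section
/- Fix integers p ≥ 4 and q ≥ 4 with (p−2)(q−2) > 4, and set t = (p−2)(q−2)−2, α = (t+√(t²−4))/2. Define ň(k) = 1 + (p(q−2)/((α−1)·√(t²−4)))·(α^k + α^{1−k} − α − 1) and ě₂(k) = (p/((α−1)·√(t²−4)))·((αq−α+1)·α^{k−1} + (q−1+α)·α^{1−k} − q(α+1)). Then for every integer k ≥ 3: ň(k) + ň(k)/(q−2) + 1 ≤ ě₂(k) ≤ ň(k) + ň(k)/(q−3). -/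
set_option maxHeartbeats 1600000 in
/-- Two-sided linear bound on the interior-edge count of the complete `k`-layered
`{p,q}`-animal in terms of its tile count, for `p, q ≥ 4` hyperbolic. -/
theorem hyperbolic_layered_interior_edges_bounds (p q : ℤ) (hp : 4 ≤ p) (hq : 4 ≤ q)
    (hpq : 4 < (p - 2) * (q - 2))
    (t α : ℝ) (ht : t = ((p : ℝ) - 2) * ((q : ℝ) - 2) - 2)
    (hα : α = (t + Real.sqrt (t ^ 2 - 4)) / 2)
    (n e₂ : ℕ → ℝ)
    (hn : ∀ k : ℕ, n k = 1 + (p : ℝ) * ((q : ℝ) - 2) / ((α - 1) * Real.sqrt (t ^ 2 - 4)) *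
      (α ^ (k : ℤ) + α ^ (1 - (k : ℤ)) - α - 1))
    (he₂ : ∀ k : ℕ, e₂ k = (p : ℝ) / ((α - 1) * Real.sqrt (t ^ 2 - 4)) *
      ((α * (q : ℝ) - α + 1) * α ^ ((k : ℤ) - 1) + ((q : ℝ) - 1 + α) * α ^ (1 - (k : ℤ)) -
        (q : ℝ) * (α + 1))) :
    ∀ k : ℕ, 3 ≤ k →
      n k + n k / ((q : ℝ) - 2) + 1 ≤ e₂ k ∧ e₂ k ≤ n k + n k / ((q : ℝ) - 3) := by
  intro k hk
  have hP : (4:ℝ) ≤ (p:ℝ) := by exact_mod_cast hp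
  have hQ : (4:ℝ) ≤ (q:ℝ) := by exact_mod_cast hq
  have hpq' : (4:ℝ) < ((p:ℝ) - 2) * ((q:ℝ) - 2) := by exact_mod_cast hpq
  have htgt : 2 < t := by rw [ht]; linarith
  set s := Real.sqrt (t ^ 2 - 4) with hsdef
  have hs2 : s ^ 2 = t ^ 2 - 4 := Real.sq_sqrt (by nlinarith)
  have hs0 : 0 < s := Real.sqrt_pos.mpr (by nlinarith)
  have hα1 : 1 < α := by rw [hα]; nlinarith
  have hα0 : 0 < α := by linarith
  have hst : t - 2 < s := by nlinarith
  have hαt : t - 1 < α := by rw [hα]; linarith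
  have hαQ : (q:ℝ) - 3 < α := by nlinarith
  have hsα : s * α = α ^ 2 - 1 := by rw [hα]; linear_combination hs2 / 4
  have hk1 : (2:ℤ) ≤ (k:ℤ) - 1 := by
    have : (3:ℤ) ≤ (k:ℤ) := by exact_mod_cast hk
    omega
  set x := α ^ ((k:ℤ) - 1) with hxdef
  have hx0 : 0 < x := zpow_pos hα0 _
  have hxge : α ^ 2 ≤ x := by
    calc α ^ 2 = α ^ ((2:ℕ):ℤ) := (zpow_natCast α 2).symm
    _ ≤ x := zpow_le_zpow_right₀ (le_of_lt hα1) hk1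
  have hαk : α ^ (k:ℤ) = x * α := by
    rw [hxdef, ← zpow_add_one₀ (ne_of_gt hα0)]
    congr 1
    ring
  have h1k : α ^ (1 - (k:ℤ)) = x⁻¹ := by
    rw [hxdef, show (1:ℤ) - (k:ℤ) = -((k:ℤ) - 1) from by ring, zpow_neg]
  have hQ2 : (0:ℝ) < (q:ℝ) - 2 := by linarith
  have hQ3 : (0:ℝ) < (q:ℝ) - 3 := by linarith
  have hD : 0 < (α - 1) * s := mul_pos (by linarith) hs0
  have hxα : α ≤ x := by nlinarith
  have hx1 : 1 ≤ x := by nlinarith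
  -- lower bound numerator
  have hPQ : 2 * (q:ℝ) - 3 ≤ (p:ℝ) * ((q:ℝ) - 2) := by
    nlinarith [mul_nonneg (show (0:ℝ) ≤ (p:ℝ) - 4 by linarith)
      (show (0:ℝ) ≤ (q:ℝ) - 2 by linarith)]
  have h1 : 0 ≤ ((p:ℝ) * ((q:ℝ) - 2) - (2 * (q:ℝ) - 3)) * (α * (x - 1) * (x - α)) :=
    mul_nonneg (by linarith)
      (mul_nonneg (mul_nonneg hα0.le (by linarith)) (by linarith))
  have h2 : 0 ≤ (2 * (q:ℝ) - 3) * ((x - α ^ 2) * (α * x - 1)) :=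
    mul_nonneg (by linarith)
      (mul_nonneg (by linarith) (by nlinarith))
  have hid : α * ((p:ℝ) * ((q:ℝ) - 2) * (x ^ 2 + α - (α + 1) * x)
      - (2 * (q:ℝ) - 3) * ((α - 1) * s) * x)
      = ((p:ℝ) * ((q:ℝ) - 2) - (2 * (q:ℝ) - 3)) * (α * (x - 1) * (x - α))
        + (2 * (q:ℝ) - 3) * ((x - α ^ 2) * (α * x - 1)) := by
    linear_combination (-(2 * (q:ℝ) - 3) * (α - 1) * x) * hsα
  have key_low : 0 ≤ (p:ℝ) * ((q:ℝ) - 2) * (x ^ 2 + α - (α + 1) * x)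
      - (2 * (q:ℝ) - 3) * ((α - 1) * s) * x := by
    have h3 : 0 ≤ α * ((p:ℝ) * ((q:ℝ) - 2) * (x ^ 2 + α - (α + 1) * x)
        - (2 * (q:ℝ) - 3) * ((α - 1) * s) * x) := by
      rw [hid]; linarith
    nlinarith [h3, hα0]
  -- upper bound numerator
  have h3 : 0 ≤ (α - (q:ℝ) + 3) * (x ^ 2 - α ^ 4) := by
    have hx4 : α ^ 4 ≤ x ^ 2 := by nlinarith [pow_le_pow_left₀ (sq_nonneg α) hxge 2]
    exact mul_nonneg (by linarith) (by linarith)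
  have h4 : 0 ≤ ((q:ℝ) - 4) * ((α + 1) * (x - α ^ 2)) :=
    mul_nonneg (by linarith) (mul_nonneg (by linarith) (by linarith))
  have h5 : 0 ≤ (α + 3 - (q:ℝ)) * (α * (α - 1) ^ 2 * (α + 1)) :=
    mul_nonneg (by linarith)
      (mul_nonneg (mul_nonneg hα0.le (sq_nonneg _)) (by linarith))
  have h6 : (0:ℝ) ≤ (α ^ 2 - 1) ^ 2 := sq_nonneg _
  have key_up : 0 ≤ (α - (q:ℝ) + 3) * x ^ 2 + ((q:ℝ) - 4) * (α + 1) * x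
      + (1 - ((q:ℝ) - 3) * α) := by nlinarith [h3, h4, h5, h6]
  constructor
  · have main1 : e₂ k - (n k + n k / ((q:ℝ) - 2) + 1)
        = ((p:ℝ) * ((q:ℝ) - 2) * (x ^ 2 + α - (α + 1) * x)
          - (2 * (q:ℝ) - 3) * ((α - 1) * s) * x)
          / (((α - 1) * s) * (((q:ℝ) - 2) * x)) := by
      rw [hn k, he₂ k, hαk, h1k, ← hxdef]
      field_simp [(sub_pos.mpr hα1).ne']
      ring
    have : 0 ≤ e₂ k - (n k + n k / ((q:ℝ) - 2) + 1) := by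
      rw [main1]
      exact div_nonneg key_low (by positivity)
    linarith
  · have main2 : (n k + n k / ((q:ℝ) - 3)) - e₂ k
        = ((p:ℝ) * ((α - (q:ℝ) + 3) * x ^ 2 + ((q:ℝ) - 4) * (α + 1) * x
            + (1 - ((q:ℝ) - 3) * α)) + ((q:ℝ) - 2) * ((α - 1) * s) * x)
          / (((α - 1) * s) * (((q:ℝ) - 3) * x)) := by
      rw [hn k, he₂ k, hαk, h1k, ← hxdef]
      field_simp [(sub_pos.mpr hα1).ne']
      ring
    have : 0 ≤ (n k + n k / ((q:ℝ) - 3)) - e₂ k := by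
      rw [main2]
      apply div_nonneg _ (by positivity)
      have : 0 ≤ ((q:ℝ) - 2) * ((α - 1) * s) * x := by positivity
      nlinarith [mul_nonneg (show (0:ℝ) ≤ (p:ℝ) by linarith) key_up]
    linarith
end
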